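/- arXiv:0903.1574 — 6 statements merged into one kernel-verified Lean document; each statement's English description precedes it below -/
import Mathlib

section
/- Let (X,d) be a metric space, k ∈ [0,1), and let S, T : X → X be mappings such that for all x, y ∈ X, ∫₀^{d(TSx,TSy)} φ(t) dt ≤ k · ∫₀^{m'(Tx,Ty)} φ(t) dt, where m'(Tx,Ty) = max{d(Tx,Ty), d(Tx,TSx), d(Ty,TSy), (d(Tx,TSy)+d(Ty,TSx))/2}. Fix x ∈ X and set xₙ = T(Sⁿx). Then for every integer n ≥ 1, ∫₀^{d(xₙ,xₙ₊₁)} φ(t) dt ≤ kⁿ · ∫₀^{d(x₀,x₁)} φ(t) dt. -/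
open Filter MeasureTheory intervalIntegral

/-- The quantity `m'(Tx,Ty)` from the paper. -/
noncomputable def mPrime {X : Type*} [MetricSpace X] (T S : X → X) (x y : X) : ℝ :=
  max (max (dist (T x) (T y)) (dist (T x) (T (S x))))
      (max (dist (T y) (T (S y)))
        ((dist (T x) (T (S y)) + dist (T y) (T (S x))) / 2))

lemma phi_intble {φ : ℝ → ℝ}
    (hφint : ∀ K : Set ℝ, K ⊆ Set.Ici (0 : ℝ) → IsCompact K → IntegrableOn φ K)
    {a b : ℝ} (ha : 0 ≤ a) (hb : 0 ≤ b) : IntervalIntegrable φ MeasureTheory.volume a b := by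
  apply (hφint (Set.uIcc a b) ?_ isCompact_uIcc).intervalIntegrable
  intro t ht
  exact le_trans (le_min ha hb) ht.1

lemma F_nonneg {φ : ℝ → ℝ}
    (hφnonneg : ∀ t ∈ Set.Ici (0 : ℝ), 0 ≤ φ t) {r : ℝ} (hr : 0 ≤ r) :
    0 ≤ ∫ t in (0:ℝ)..r, φ t := by
  apply intervalIntegral.integral_nonneg hr
  intro u hu; exact hφnonneg u hu.1

lemma F_mono {φ : ℝ → ℝ}
    (hφnonneg : ∀ t ∈ Set.Ici (0 : ℝ), 0 ≤ φ t)
    (hφint : ∀ K : Set ℝ, K ⊆ Set.Ici (0 : ℝ) → IsCompact K → IntegrableOn φ K)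
    {a b : ℝ} (ha : 0 ≤ a) (hab : a ≤ b) :
    (∫ t in (0:ℝ)..a, φ t) ≤ ∫ t in (0:ℝ)..b, φ t := by
  have hb : 0 ≤ b := ha.trans hab
  have h1 : (∫ t in (0:ℝ)..a, φ t) + (∫ t in a..b, φ t) = ∫ t in (0:ℝ)..b, φ t :=
    intervalIntegral.integral_add_adjacent_intervals (phi_intble hφint le_rfl ha)
      (phi_intble hφint ha hb)
  have h2 : 0 ≤ ∫ t in a..b, φ t := by
    apply intervalIntegral.integral_nonneg hab
    intro u hu; exact hφnonneg u (ha.trans hu.1)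
  linarith

theorem iterates_integral_estimate
    {X : Type*} [MetricSpace X]
    (k : ℝ) (hk0 : 0 ≤ k) (hk1 : k < 1)
    (S T : X → X)
    (φ : ℝ → ℝ)
    (hφnonneg : ∀ t ∈ Set.Ici (0 : ℝ), 0 ≤ φ t)
    (hφint : ∀ K : Set ℝ, K ⊆ Set.Ici (0 : ℝ) → IsCompact K → IntegrableOn φ K)
    (hφpos : ∀ ε : ℝ, 0 < ε → 0 < ∫ t in (0 : ℝ)..ε, φ t)
    (hcontr : ∀ x y : X,
      (∫ t in (0 : ℝ)..(dist (T (S x)) (T (S y))), φ t) ≤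
        k * ∫ t in (0 : ℝ)..(mPrime T S x y), φ t)
    (x : X) (xseq : ℕ → X) (hx : ∀ n, xseq n = T (S^[n] x)) :
    ∀ n : ℕ, 1 ≤ n →
      (∫ t in (0 : ℝ)..(dist (xseq n) (xseq (n + 1))), φ t) ≤
        k ^ n * ∫ t in (0 : ℝ)..(dist (xseq 0) (xseq 1)), φ t := by
  set F : ℝ → ℝ := fun r => ∫ t in (0:ℝ)..r, φ t with hF
  set d : ℕ → ℝ := fun n => dist (xseq n) (xseq (n+1)) with hd
  have hdnn : ∀ n, 0 ≤ d n := fun n => dist_nonneg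
  have hstep : ∀ n : ℕ, F (d (n+1)) ≤ k * F (d n) := by
    intro n
    have hiter : ∀ m : ℕ, T (S (S^[m] x)) = xseq (m+1) := by
      intro m
      rw [hx (m+1), Function.iterate_succ_apply']
    have hc := hcontr (S^[n] x) (S^[n+1] x)
    rw [hiter n, hiter (n+1)] at hc
    have hm : mPrime T S (S^[n] x) (S^[n+1] x) ≤ max (d n) (d (n+1)) := by
      unfold mPrime
      rw [hiter n, hiter (n+1), ← hx n, ← hx (n+1)]
      have htri : dist (xseq n) (xseq (n+2)) ≤ d n + d (n+1) := dist_triangle _ _ _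
      have h1 : d n ≤ max (d n) (d (n+1)) := le_max_left _ _
      have h2 : d (n+1) ≤ max (d n) (d (n+1)) := le_max_right _ _
      simp only [max_le_iff]
      refine ⟨⟨h1, h1⟩, h2, ?_⟩
      rw [dist_self]
      have : (n+1)+1 = n+2 := rfl
      rw [this]
      nlinarith [le_max_left (d n) (d (n+1)), le_max_right (d n) (d (n+1))]
    have hmnn : (0:ℝ) ≤ mPrime T S (S^[n] x) (S^[n+1] x) := by
      unfold mPrime
      exact le_trans dist_nonneg (le_trans (le_max_left _ _) (le_max_left _ _))
    have hFm : F (mPrime T S (S^[n] x) (S^[n+1] x)) ≤ F (max (d n) (d (n+1))) :=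
      F_mono hφnonneg hφint hmnn hm
    have hc2 : F (d (n+1)) ≤ k * F (max (d n) (d (n+1))) := by
      calc F (d (n+1)) ≤ k * F (mPrime T S (S^[n] x) (S^[n+1] x)) := hc
        _ ≤ k * F (max (d n) (d (n+1))) := by
            exact mul_le_mul_of_nonneg_left hFm hk0
    rcases le_total (d (n+1)) (d n) with h | h
    · rwa [max_eq_left h] at hc2
    · rw [max_eq_right h] at hc2
      have hFnn : 0 ≤ F (d (n+1)) := F_nonneg hφnonneg (hdnn _)
      have : F (d (n+1)) ≤ 0 := by nlinarith
      have hFnn' : 0 ≤ F (d n) := F_nonneg hφnonneg (hdnn _)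
      nlinarith
  have main : ∀ n : ℕ, F (d n) ≤ k ^ n * F (d 0) := by
    intro n
    induction n with
    | zero => simp
    | succ m ih =>
        calc F (d (m+1)) ≤ k * F (d m) := hstep m
          _ ≤ k * (k ^ m * F (d 0)) := mul_le_mul_of_nonneg_left ih hk0
          _ = k ^ (m+1) * F (d 0) := by ring
  intro n _
  exact main n
end

section
/- Let (X,d) be a metric space, k ∈ [0,1), and let S, T : X → X be mappings such that for all x, y ∈ X, ∫₀^{d(TSx,TSy)} φ(t) dt ≤ k · ∫₀^{m'(Tx,Ty)} φ(t) dt, where m'(Tx,Ty) = max{d(Tx,Ty), d(Tx,TSx), d(Ty,TSy), (d(Tx,TSy)+d(Ty,TSx))/2}. Fix x ∈ X and set xₙ = T(Sⁿx). Then d(xₙ, xₙ₊₁) → 0 as n → ∞. -/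
open Filter MeasureTheory intervalIntegral

theorem iterates_successive_distances_tendsto_zero
    {X : Type*} [MetricSpace X]
    (k : ℝ) (hk0 : 0 ≤ k) (hk1 : k < 1)
    (S T : X → X)
    (φ : ℝ → ℝ)
    (hφnonneg : ∀ t ∈ Set.Ici (0 : ℝ), 0 ≤ φ t)
    (hφint : ∀ K : Set ℝ, K ⊆ Set.Ici (0 : ℝ) → IsCompact K → IntegrableOn φ K)
    (hφpos : ∀ ε : ℝ, 0 < ε → 0 < ∫ t in (0 : ℝ)..ε, φ t)
    (hcontr : ∀ x y : X,
      (∫ t in (0 : ℝ)..(dist (T (S x)) (T (S y))), φ t) ≤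
        k * ∫ t in (0 : ℝ)..(mPrime T S x y), φ t)
    (x : X) (xseq : ℕ → X) (hx : ∀ n, xseq n = T (S^[n] x)) :
    Tendsto (fun n => dist (xseq n) (xseq (n + 1))) atTop (nhds 0) := by
  set F : ℝ → ℝ := fun r => ∫ t in (0:ℝ)..r, φ t with hF
  have hInt : ∀ a b : ℝ, 0 ≤ a → a ≤ b → IntervalIntegrable φ volume a b := by
    intro a b ha hab
    have h1 : IntegrableOn φ (Set.uIcc a b) := by
      rw [Set.uIcc_of_le hab]
      exact hφint (Set.Icc a b) (fun t ht => le_trans ha ht.1) isCompact_Icc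
    exact h1.intervalIntegrable
  have hFmono : ∀ a b : ℝ, 0 ≤ a → a ≤ b → F a ≤ F b := by
    intro a b ha hab
    have h1 : F a + ∫ t in a..b, φ t = F b :=
      integral_add_adjacent_intervals (hInt 0 a le_rfl ha) (hInt a b ha hab)
    have h2 : 0 ≤ ∫ t in a..b, φ t :=
      intervalIntegral.integral_nonneg hab (fun u hu => hφnonneg u (le_trans ha hu.1))
    linarith
  have hF0 : F 0 = 0 := intervalIntegral.integral_same
  have hFnonneg : ∀ a : ℝ, 0 ≤ a → 0 ≤ F a := fun a ha => hF0 ▸ hFmono 0 a le_rfl ha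
  set d : ℕ → ℝ := fun n => dist (xseq n) (xseq (n + 1)) with hdd
  have hdnn : ∀ n, 0 ≤ d n := fun n => dist_nonneg
  have key : ∀ n, F (d (n + 1)) ≤ k * F (d n) := by
    intro n
    have hc := hcontr (S^[n] x) (S^[n+1] x)
    have e1 : T (S (S^[n] x)) = xseq (n + 1) := by
      rw [hx, Function.iterate_succ_apply']
    have e2 : T (S (S^[n+1] x)) = xseq (n + 2) := by
      rw [hx, Function.iterate_succ_apply' S (n+1) x]
    have hm : mPrime T S (S^[n] x) (S^[n+1] x) ≤ max (d n) (d (n + 1)) := by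
      unfold mPrime
      rw [e1, e2, ← hx n, ← hx (n+1)]
      have htri : (dist (xseq n) (xseq (n + 2)) + dist (xseq (n + 1)) (xseq (n + 1))) / 2
          ≤ max (d n) (d (n + 1)) := by
        rw [dist_self]
        have h3 := dist_triangle (xseq n) (xseq (n + 1)) (xseq (n + 2))
        have h1 : d n ≤ max (d n) (d (n + 1)) := le_max_left _ _
        have h2 : d (n + 1) ≤ max (d n) (d (n + 1)) := le_max_right _ _
        simp only [hdd] at h1 h2 ⊢
        linarith
      have hdn : dist (xseq n) (xseq (n + 1)) ≤ max (d n) (d (n + 1)) := by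
        simp only [hdd]; exact le_max_left _ _
      have hdn1 : dist (xseq (n + 1)) (xseq (n + 2)) ≤ max (d n) (d (n + 1)) := by
        simp only [hdd]; exact le_max_right _ _
      exact max_le (max_le hdn hdn) (max_le hdn1 htri)
    have hc' : F (d (n + 1)) ≤ k * F (mPrime T S (S^[n] x) (S^[n+1] x)) := by
      have e3 : dist (T (S (S^[n] x))) (T (S (S^[n+1] x))) = d (n + 1) := by
        rw [e1, e2]
      rw [hF, ← e3]
      exact hc
    have hmnn : 0 ≤ mPrime T S (S^[n] x) (S^[n+1] x) :=
      le_trans dist_nonneg (le_trans (le_max_left _ _) (le_max_left _ _))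
    have h3 : F (d (n + 1)) ≤ k * F (max (d n) (d (n + 1))) :=
      le_trans hc' (mul_le_mul_of_nonneg_left (hFmono _ _ hmnn hm) hk0)
    rcases le_total (d (n + 1)) (d n) with h | h
    · rwa [max_eq_left h] at h3
    · rw [max_eq_right h] at h3
      have h0 : F (d (n + 1)) = 0 := by
        have h4 := hFnonneg (d (n + 1)) (hdnn _)
        nlinarith
      rw [h0]
      exact mul_nonneg hk0 (hFnonneg _ (hdnn n))
  have hgeo : ∀ n, F (d n) ≤ k ^ n * F (d 0) := by
    intro n; induction n with
    | zero => simp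
    | succ n ih =>
      calc F (d (n + 1)) ≤ k * F (d n) := key n
        _ ≤ k * (k ^ n * F (d 0)) := mul_le_mul_of_nonneg_left ih hk0
        _ = k ^ (n + 1) * F (d 0) := by ring
  have hlim : Tendsto (fun n => F (d n)) atTop (nhds 0) := by
    have h1 : Tendsto (fun n : ℕ => k ^ n * F (d 0)) atTop (nhds 0) := by
      have h2 := tendsto_pow_atTop_nhds_zero_of_lt_one hk0 hk1
      simpa using h2.mul_const (F (d 0))
    exact squeeze_zero (fun n => hFnonneg _ (hdnn n)) hgeo h1
  rw [Metric.tendsto_atTop]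
  intro ε hε
  obtain ⟨N, hN⟩ := (Metric.tendsto_atTop.mp hlim) (F ε) (hφpos ε hε)
  refine ⟨N, fun n hn => ?_⟩
  have h5 := hN n hn
  rw [Real.dist_eq, sub_zero, abs_of_nonneg (hFnonneg _ (hdnn n))] at h5
  rw [Real.dist_eq, sub_zero, abs_of_nonneg (hdnn n)]
  by_contra h
  push_neg at h
  exact absurd h5 (not_lt.mpr (hFmono ε (d n) hε.le h))
end

section
/- Let (X,d) be a metric space, k ∈ [0,1), and let S, T : X → X be mappings such that for all x, y ∈ X, ∫₀^{d(TSx,TSy)} φ(t) dt ≤ k · ∫₀^{m'(Tx,Ty)} φ(t) dt, where m'(Tx,Ty) = max{d(Tx,Ty), d(Tx,TSx), d(Ty,TSy), (d(Tx,TSy)+d(Ty,TSx))/2}. Fix x ∈ X and set xₙ = T(Sⁿx). Then the sequence {xₙ} is bounded, i.e., there exists M > 0 such that d(xₘ, xₙ) ≤ M for all m, n. -/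
open Filter MeasureTheory intervalIntegral

open Topology

theorem iterates_bounded
    {X : Type*} [MetricSpace X]
    (k : ℝ) (hk0 : 0 ≤ k) (hk1 : k < 1)
    (S T : X → X)
    (φ : ℝ → ℝ)
    (hφnonneg : ∀ t ∈ Set.Ici (0 : ℝ), 0 ≤ φ t)
    (hφint : ∀ K : Set ℝ, K ⊆ Set.Ici (0 : ℝ) → IsCompact K → IntegrableOn φ K)
    (hφpos : ∀ ε : ℝ, 0 < ε → 0 < ∫ t in (0 : ℝ)..ε, φ t)
    (hcontr : ∀ x y : X,
      (∫ t in (0 : ℝ)..(dist (T (S x)) (T (S y))), φ t) ≤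
        k * ∫ t in (0 : ℝ)..(mPrime T S x y), φ t)
    (x : X) (xseq : ℕ → X) (hx : ∀ n, xseq n = T (S^[n] x)) :
    ∃ M : ℝ, 0 < M ∧ ∀ m n : ℕ, dist (xseq m) (xseq n) ≤ M := by
  classical
  set Φ : ℝ → ℝ := fun s => ∫ t in (0:ℝ)..s, φ t with hΦdef
  -- interval integrability on nonnegative intervals
  have hII : ∀ a b : ℝ, 0 ≤ a → 0 ≤ b → IntervalIntegrable φ volume a b := by
    intro a b ha hb
    have hsub : Set.uIcc a b ⊆ Set.Ici (0:ℝ) := fun t ht => le_trans (le_min ha hb) ht.1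
    exact (hφint _ hsub isCompact_uIcc).intervalIntegrable
  -- monotonicity of Φ on [0, ∞)
  have hmono : ∀ a b : ℝ, 0 ≤ a → a ≤ b → Φ a ≤ Φ b := by
    intro a b ha hab
    have h1 : IntervalIntegrable φ volume 0 a := hII 0 a le_rfl ha
    have h2 : IntervalIntegrable φ volume a b := hII a b ha (ha.trans hab)
    have h3 : (0:ℝ) ≤ ∫ t in a..b, φ t :=
      intervalIntegral.integral_nonneg hab (fun u hu => hφnonneg u (le_trans ha hu.1))
    have h4 := intervalIntegral.integral_add_adjacent_intervals h1 h2
    simp only [hΦdef]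
    linarith [h4]
  -- the master inequality, in terms of the sequence
  have key : ∀ m n : ℕ, Φ (dist (xseq (m+1)) (xseq (n+1))) ≤
      k * Φ (max (max (dist (xseq m) (xseq n)) (dist (xseq m) (xseq (m+1))))
        (max (dist (xseq n) (xseq (n+1)))
          ((dist (xseq m) (xseq (n+1)) + dist (xseq n) (xseq (m+1))) / 2))) := by
    intro m n
    have h := hcontr (S^[m] x) (S^[n] x)
    simp only [mPrime, ← Function.iterate_succ_apply' S, ← hx] at h
    exact h
  set D : ℕ → ℝ := fun n => dist (xseq n) (xseq (n+1)) with hDdef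
  have hD0 : ∀ n, (0:ℝ) ≤ D n := fun n => dist_nonneg
  -- consecutive distances are nonincreasing
  have hstep : ∀ n, D (n+1) ≤ D n := by
    intro n
    by_contra hlt
    push_neg at hlt
    have h := key n (n+1)
    have htri : dist (xseq n) (xseq (n+2)) ≤ D n + D (n+1) :=
      dist_triangle (xseq n) (xseq (n+1)) (xseq (n+2))
    have hmaxle : max (max (dist (xseq n) (xseq (n+1))) (dist (xseq n) (xseq (n+1))))
        (max (dist (xseq (n+1)) (xseq (n+2)))
          ((dist (xseq n) (xseq (n+2)) + dist (xseq (n+1)) (xseq (n+1))) / 2)) ≤ D (n+1) := by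
      rw [dist_self]
      refine max_le (max_le hlt.le hlt.le) (max_le le_rfl ?_)
      have : dist (xseq (n+1)) (xseq (n+2)) = D (n+1) := rfl
      simp only [hDdef] at *
      linarith
    have h0 : (0:ℝ) ≤ max (max (dist (xseq n) (xseq (n+1))) (dist (xseq n) (xseq (n+1))))
        (max (dist (xseq (n+1)) (xseq (n+2)))
          ((dist (xseq n) (xseq (n+2)) + dist (xseq (n+1)) (xseq (n+1))) / 2)) :=
      le_trans dist_nonneg (le_trans (le_max_left _ _) (le_max_left _ _))
    have h2 : Φ (D (n+1)) ≤ k * Φ (D (n+1)) :=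
      le_trans h (mul_le_mul_of_nonneg_left (hmono _ _ h0 hmaxle) hk0)
    have hpos : 0 < Φ (D (n+1)) := hφpos _ (lt_of_le_of_lt (hD0 n) hlt)
    nlinarith
  have hstepΦ : ∀ n, Φ (D (n+1)) ≤ k * Φ (D n) := by
    intro n
    have h := key n (n+1)
    have hmaxle : max (max (dist (xseq n) (xseq (n+1))) (dist (xseq n) (xseq (n+1))))
        (max (dist (xseq (n+1)) (xseq (n+2)))
          ((dist (xseq n) (xseq (n+2)) + dist (xseq (n+1)) (xseq (n+1))) / 2)) ≤ D n := by
      rw [dist_self]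
      have h1 : dist (xseq (n+1)) (xseq (n+2)) ≤ D n := hstep n
      have htri : dist (xseq n) (xseq (n+2)) ≤ D n + D (n+1) :=
        dist_triangle (xseq n) (xseq (n+1)) (xseq (n+2))
      have h2 : D (n+1) ≤ D n := hstep n
      refine max_le (max_le le_rfl le_rfl) (max_le h1 ?_)
      linarith
    have h0 : (0:ℝ) ≤ max (max (dist (xseq n) (xseq (n+1))) (dist (xseq n) (xseq (n+1))))
        (max (dist (xseq (n+1)) (xseq (n+2)))
          ((dist (xseq n) (xseq (n+2)) + dist (xseq (n+1)) (xseq (n+1))) / 2)) :=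
      le_trans dist_nonneg (le_trans (le_max_left _ _) (le_max_left _ _))
    exact le_trans h (mul_le_mul_of_nonneg_left (hmono _ _ h0 hmaxle) hk0)
  have hanti : ∀ m n : ℕ, m ≤ n → D n ≤ D m := by
    intro m n hmn
    induction n with
    | zero => simp [Nat.le_zero.mp hmn]
    | succ n ih =>
      rcases Nat.lt_or_ge m (n+1) with h | h
      · exact le_trans (hstep n) (ih (Nat.lt_succ_iff.mp h))
      · have : m = n + 1 := le_antisymm hmn h
        simp [this]
  have hgeo : ∀ n, Φ (D n) ≤ k ^ n * Φ (D 0) := by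
    intro n
    induction n with
    | zero => simp
    | succ n ih =>
      calc Φ (D (n+1)) ≤ k * Φ (D n) := hstepΦ n
        _ ≤ k * (k ^ n * Φ (D 0)) := mul_le_mul_of_nonneg_left ih hk0
        _ = k ^ (n+1) * Φ (D 0) := by ring
  -- steps become small
  have hsmall : ∀ ε : ℝ, 0 < ε → ∃ N : ℕ, ∀ n, N ≤ n → D n ≤ ε := by
    intro ε hε
    have htend : Tendsto (fun n : ℕ => k ^ n * Φ (D 0)) atTop (𝓝 0) := by
      have := (tendsto_pow_atTop_nhds_zero_of_lt_one hk0 hk1).mul_const (Φ (D 0))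
      simpa using this
    have hev : ∀ᶠ n in atTop, k ^ n * Φ (D 0) < Φ ε :=
      htend.eventually_lt_const (hφpos ε hε)
    obtain ⟨N, hN⟩ := hev.exists
    refine ⟨N, fun n hn => ?_⟩
    by_contra hc
    push_neg at hc
    have h1 : Φ ε ≤ Φ (D n) := hmono ε (D n) hε.le hc.le
    have h2 : Φ (D n) ≤ Φ (D N) := by
      rcases le_or_gt (D n) (D N) with h | h
      · exact hmono _ _ (hD0 n) h
      · exact absurd (hanti N n hn) (not_le.mpr h)
    have h3 : Φ (D N) ≤ k ^ N * Φ (D 0) := hgeo N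
    linarith
  -- chain bound
  have hchain : ∀ a b : ℕ, dist (xseq a) (xseq (a + b)) ≤ (b : ℝ) * D 0 := by
    intro a b
    induction b with
    | zero => simp
    | succ b ih =>
      have h1 : dist (xseq a) (xseq (a + b + 1)) ≤
          dist (xseq a) (xseq (a + b)) + D (a + b) :=
        dist_triangle (xseq a) (xseq (a + b)) (xseq (a + b + 1))
      have h2 : D (a + b) ≤ D 0 := hanti 0 (a + b) (Nat.zero_le _)
      have : (a + (b + 1)) = (a + b + 1) := by omega
      rw [this]
      push_cast
      calc dist (xseq a) (xseq (a + b + 1)) ≤ (b : ℝ) * D 0 + D 0 := by linarith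
        _ = ((b : ℝ) + 1) * D 0 := by ring
  by_contra hM
  push_neg at hM
  -- key claim: Φ(1-ε) ≤ k Φ(1+ε) for all small ε
  have claim : ∀ ε : ℝ, 0 < ε → ε ≤ 1 → Φ (1 - ε) ≤ k * Φ (1 + ε) := by
    intro ε hε hε1
    obtain ⟨N, hN⟩ := hsmall ε hε
    -- find a point far from xseq N
    have hDnn : (0:ℝ) ≤ (N : ℝ) * D 0 := mul_nonneg (Nat.cast_nonneg N) (hD0 0)
    obtain ⟨m, n, hmn⟩ := hM (2 * ((N : ℝ) * D 0 + 2)) (by linarith)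
    have hfar : ∃ p : ℕ, (N : ℝ) * D 0 + 1 < dist (xseq N) (xseq p) := by
      by_contra hc
      push_neg at hc
      have h1 := hc m
      have h2 := hc n
      have h3 := dist_triangle (xseq m) (xseq N) (xseq n)
      rw [dist_comm (xseq m) (xseq N)] at h3
      linarith
    obtain ⟨p, hp⟩ := hfar
    have hpN : N < p := by
      by_contra hc
      push_neg at hc
      have h1 : dist (xseq p) (xseq N) ≤ ((N - p : ℕ) : ℝ) * D 0 := by
        have := hchain p (N - p)
        rwa [Nat.add_sub_cancel' hc] at this
      have h2 : ((N - p : ℕ) : ℝ) * D 0 ≤ (N : ℝ) * D 0 :=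
        mul_le_mul_of_nonneg_right (by exact_mod_cast Nat.sub_le N p) (hD0 0)
      rw [dist_comm] at hp
      linarith
    have hPex : ∃ j : ℕ, 1 < dist (xseq N) (xseq (N + j)) := by
      refine ⟨p - N, ?_⟩
      rw [Nat.add_sub_cancel' hpN.le]
      linarith
    set j0 := Nat.find hPex with hj0def
    have hj0 : 1 < dist (xseq N) (xseq (N + j0)) := Nat.find_spec hPex
    have hj0pos : 0 < j0 := by
      rcases Nat.eq_zero_or_pos j0 with h | h
      · exfalso; rw [h] at hj0; simp at hj0; linarith
      · exact h
    have hprev : dist (xseq N) (xseq (N + (j0 - 1))) ≤ 1 := by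
      have := Nat.find_min hPex (show j0 - 1 < j0 from Nat.sub_lt hj0pos one_pos)
      push_neg at this
      exact this
    set q := N + (j0 - 1) with hqdef
    have hq1 : q + 1 = N + j0 := by omega
    have hDN : D N ≤ ε := hN N le_rfl
    have hDq : D q ≤ ε := hN q (Nat.le_add_right _ _)
    have hqfar : 1 < dist (xseq N) (xseq (q + 1)) := by rw [hq1]; exact hj0
    have hb1 : dist (xseq N) (xseq (q + 1)) ≤ 1 + ε := by
      have := dist_triangle (xseq N) (xseq q) (xseq (q + 1))
      have h2 : dist (xseq q) (xseq (q+1)) = D q := rfl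
      linarith [hprev]
    have hb2 : dist (xseq q) (xseq (N + 1)) ≤ 1 + ε := by
      have := dist_triangle (xseq q) (xseq N) (xseq (N + 1))
      rw [dist_comm (xseq q) (xseq N)] at this
      have h2 : dist (xseq N) (xseq (N+1)) = D N := rfl
      linarith [hprev]
    have h := key N q
    have hmaxle : max (max (dist (xseq N) (xseq q)) (dist (xseq N) (xseq (N+1))))
        (max (dist (xseq q) (xseq (q+1)))
          ((dist (xseq N) (xseq (q+1)) + dist (xseq q) (xseq (N+1))) / 2)) ≤ 1 + ε := by
      have e1 : dist (xseq N) (xseq (N+1)) = D N := rfl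
      have e2 : dist (xseq q) (xseq (q+1)) = D q := rfl
      refine max_le (max_le (by linarith [hprev]) (by rw [e1]; linarith))
        (max_le (by rw [e2]; linarith) (by linarith))
    have h0 : (0:ℝ) ≤ max (max (dist (xseq N) (xseq q)) (dist (xseq N) (xseq (N+1))))
        (max (dist (xseq q) (xseq (q+1)))
          ((dist (xseq N) (xseq (q+1)) + dist (xseq q) (xseq (N+1))) / 2)) :=
      le_trans dist_nonneg (le_trans (le_max_left _ _) (le_max_left _ _))
    have hlow : 1 - ε ≤ dist (xseq (N+1)) (xseq (q+1)) := by
      have ht := dist_triangle (xseq N) (xseq (N+1)) (xseq (q+1))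
      have e1 : dist (xseq N) (xseq (N+1)) = D N := rfl
      linarith
    calc Φ (1 - ε) ≤ Φ (dist (xseq (N+1)) (xseq (q+1))) := hmono _ _ (by linarith) hlow
      _ ≤ k * Φ (1 + ε) := le_trans h (mul_le_mul_of_nonneg_left (hmono _ _ h0 hmaxle) hk0)
  -- continuity of Φ at 1 and passing to the limit
  have hint2 : IntegrableOn φ (Set.uIcc (0:ℝ) 2) := by
    refine hφint _ (fun t ht => ?_) isCompact_uIcc
    have h1 : min (0:ℝ) 2 ≤ t := ht.1
    simpa using le_trans (by norm_num) h1
  have hcontOn : ContinuousOn Φ (Set.uIcc (0:ℝ) 2) :=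
    intervalIntegral.continuousOn_primitive_interval hint2
  have hmem : Set.uIcc (0:ℝ) 2 ∈ 𝓝 (1:ℝ) := by
    rw [Set.uIcc_of_le (by norm_num : (0:ℝ) ≤ 2)]
    exact Icc_mem_nhds (by norm_num) (by norm_num)
  have hcont : ContinuousAt Φ 1 := hcontOn.continuousAt hmem
  have t1 : Tendsto (fun ε : ℝ => Φ (1 - ε)) (𝓝[>] (0:ℝ)) (𝓝 (Φ 1)) := by
    have hsub : Tendsto (fun ε : ℝ => 1 - ε) (𝓝[>] (0:ℝ)) (𝓝 (1:ℝ)) := by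
      have : Tendsto (fun ε : ℝ => 1 - ε) (𝓝 (0:ℝ)) (𝓝 (1 - 0 : ℝ)) :=
        (continuous_const.sub continuous_id).tendsto 0
      simpa using this.mono_left nhdsWithin_le_nhds
    exact hcont.tendsto.comp hsub
  have t2 : Tendsto (fun ε : ℝ => k * Φ (1 + ε)) (𝓝[>] (0:ℝ)) (𝓝 (k * Φ 1)) := by
    have hadd : Tendsto (fun ε : ℝ => 1 + ε) (𝓝[>] (0:ℝ)) (𝓝 (1:ℝ)) := by
      have : Tendsto (fun ε : ℝ => 1 + ε) (𝓝 (0:ℝ)) (𝓝 (1 + 0 : ℝ)) :=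
        (continuous_const.add continuous_id).tendsto 0
      simpa using this.mono_left nhdsWithin_le_nhds
    exact tendsto_const_nhds.mul (hcont.tendsto.comp hadd)
  have hev : ∀ᶠ ε in 𝓝[>] (0:ℝ), Φ (1 - ε) ≤ k * Φ (1 + ε) := by
    filter_upwards [Ioc_mem_nhdsGT_of_mem (Set.mem_Ico.mpr ⟨le_refl (0:ℝ), one_pos⟩)]
      with ε hε
    exact claim ε hε.1 hε.2
  have hfin : Φ 1 ≤ k * Φ 1 := le_of_tendsto_of_tendsto t1 t2 hev
  have hpos1 : 0 < Φ 1 := hφpos 1 one_pos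
  nlinarith
end

section
/- Let (X,d) be a metric space, k ∈ [0,1), and let S, T : X → X be mappings such that for all x, y ∈ X, ∫₀^{d(TSx,TSy)} φ(t) dt ≤ k · ∫₀^{m'(Tx,Ty)} φ(t) dt, where m'(Tx,Ty) = max{d(Tx,Ty), d(Tx,TSx), d(Ty,TSy), (d(Tx,TSy)+d(Ty,TSx))/2}. Fix x ∈ X and set xₙ = T(Sⁿx). Then {xₙ} is a Cauchy sequence. -/
open Filter MeasureTheory intervalIntegral

lemma psi_intervalIntegrable (φ : ℝ → ℝ)
    (hφint : ∀ K : Set ℝ, K ⊆ Set.Ici (0 : ℝ) → IsCompact K → IntegrableOn φ K) :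
    ∀ a b : ℝ, IntervalIntegrable ((Set.Ici (0:ℝ)).indicator φ) volume a b := by
  intro a b
  have h1 : IntegrableOn φ (Set.Ici (0:ℝ) ∩ Set.uIcc a b) := by
    refine hφint _ Set.inter_subset_left ?_
    exact isCompact_uIcc.inter_left isClosed_Ici
  rw [intervalIntegrable_iff, IntegrableOn, integrable_indicator_iff measurableSet_Ici,
    IntegrableOn, Measure.restrict_restrict measurableSet_Ici]
  exact h1.mono_set (Set.inter_subset_inter_right _ Set.uIoc_subset_uIcc)

theorem iterates_cauchy
    {X : Type*} [MetricSpace X]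
    (k : ℝ) (hk0 : 0 ≤ k) (hk1 : k < 1)
    (S T : X → X)
    (φ : ℝ → ℝ)
    (hφnonneg : ∀ t ∈ Set.Ici (0 : ℝ), 0 ≤ φ t)
    (hφint : ∀ K : Set ℝ, K ⊆ Set.Ici (0 : ℝ) → IsCompact K → IntegrableOn φ K)
    (hφpos : ∀ ε : ℝ, 0 < ε → 0 < ∫ t in (0 : ℝ)..ε, φ t)
    (hcontr : ∀ x y : X,
      (∫ t in (0 : ℝ)..(dist (T (S x)) (T (S y))), φ t) ≤
        k * ∫ t in (0 : ℝ)..(mPrime T S x y), φ t)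
    (x : X) (xseq : ℕ → X) (hx : ∀ n, xseq n = T (S^[n] x)) :
    CauchySeq xseq := by
  classical
  set ψ : ℝ → ℝ := (Set.Ici (0:ℝ)).indicator φ with hψdef
  have hψint : ∀ a b : ℝ, IntervalIntegrable ψ volume a b :=
    psi_intervalIntegrable φ hφint
  have hψ0 : ∀ t, 0 ≤ ψ t := Set.indicator_nonneg hφnonneg
  set G : ℝ → ℝ := fun r => ∫ t in (0:ℝ)..r, ψ t with hGdef
  have hGcont : Continuous G := intervalIntegral.continuous_primitive hψint 0
  have hGmono : ∀ a b : ℝ, a ≤ b → G a ≤ G b := by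
    intro a b hab
    have hadd := integral_add_adjacent_intervals (hψint 0 a) (hψint a b)
    have hnn : 0 ≤ ∫ t in a..b, ψ t :=
      intervalIntegral.integral_nonneg hab (fun u _ => hψ0 u)
    have : G a + ∫ t in a..b, ψ t = G b := hadd
    linarith
  have hG00 : G 0 = 0 := intervalIntegral.integral_same
  have hG0 : ∀ r : ℝ, 0 ≤ r → 0 ≤ G r := by
    intro r hr
    have := hGmono 0 r hr
    linarith
  have hGF : ∀ r : ℝ, 0 ≤ r → G r = ∫ t in (0:ℝ)..r, φ t := by
    intro r hr
    apply intervalIntegral.integral_congr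
    intro t ht
    rw [Set.uIcc_of_le hr] at ht
    exact Set.indicator_of_mem (Set.mem_Ici.mpr ht.1) φ
  have hGpos : ∀ e : ℝ, 0 < e → 0 < G e := by
    intro e he
    rw [hGF e he.le]
    exact hφpos e he
  have hmp_nonneg : ∀ a b : X, 0 ≤ mPrime T S a b := fun a b =>
    le_trans dist_nonneg (le_trans (le_max_left _ _) (le_max_left _ _))
  have hcontr' : ∀ a b : X, G (dist (T (S a)) (T (S b))) ≤ k * G (mPrime T S a b) := by
    intro a b
    rw [hGF _ dist_nonneg, hGF _ (hmp_nonneg a b)]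
    exact hcontr a b
  -- Step estimate on consecutive distances
  have hstep : ∀ n : ℕ,
      G (dist (xseq (n+1)) (xseq (n+2))) ≤ k * G (dist (xseq n) (xseq (n+1))) := by
    intro n
    have h := hcontr' (S^[n] x) (S^[n+1] x)
    have e1 : T (S (S^[n] x)) = xseq (n+1) := by
      rw [← Function.iterate_succ_apply' S n x, ← hx]
    have e2 : T (S (S^[n+1] x)) = xseq (n+2) := by
      rw [← Function.iterate_succ_apply' S (n+1) x, ← hx]
    have e3 : T (S^[n] x) = xseq n := (hx n).symm
    have e4 : T (S^[n+1] x) = xseq (n+1) := (hx (n+1)).symm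
    rw [mPrime, e1, e2, e3, e4] at h
    have hmax : G (dist (xseq (n+1)) (xseq (n+2))) ≤
        k * G (max (dist (xseq n) (xseq (n+1))) (dist (xseq (n+1)) (xseq (n+2)))) := by
      refine le_trans h (mul_le_mul_of_nonneg_left (hGmono _ _ ?_) hk0)
      have hC := dist_triangle (xseq n) (xseq (n+1)) (xseq (n+2))
      have h1 := le_max_left (dist (xseq n) (xseq (n+1))) (dist (xseq (n+1)) (xseq (n+2)))
      have h2 := le_max_right (dist (xseq n) (xseq (n+1))) (dist (xseq (n+1)) (xseq (n+2)))
      refine max_le (max_le h1 h1) (max_le h2 ?_)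
      rw [dist_self]
      linarith
    rcases le_or_gt (dist (xseq (n+1)) (xseq (n+2))) (dist (xseq n) (xseq (n+1))) with hle | hlt
    · rwa [max_eq_left hle] at hmax
    · rw [max_eq_right hlt.le] at hmax
      have hpos : 0 < G (dist (xseq (n+1)) (xseq (n+2))) :=
        hGpos _ (lt_of_le_of_lt dist_nonneg hlt)
      nlinarith [mul_pos (sub_pos.mpr hk1) hpos]
  have hgeo : ∀ n : ℕ,
      G (dist (xseq n) (xseq (n+1))) ≤ k ^ n * G (dist (xseq 0) (xseq 1)) := by
    intro n
    induction n with
    | zero => simp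
    | succ n ih =>
      calc G (dist (xseq (n+1)) (xseq (n+2))) ≤ k * G (dist (xseq n) (xseq (n+1))) := hstep n
        _ ≤ k * (k ^ n * G (dist (xseq 0) (xseq 1))) := mul_le_mul_of_nonneg_left ih hk0
        _ = k ^ (n+1) * G (dist (xseq 0) (xseq 1)) := by ring
  have hGtend : Tendsto (fun n => G (dist (xseq n) (xseq (n+1)))) atTop (nhds 0) := by
    have h1 : Tendsto (fun n : ℕ => k ^ n * G (dist (xseq 0) (xseq 1))) atTop (nhds 0) := by
      simpa using (tendsto_pow_atTop_nhds_zero_of_lt_one hk0 hk1).mul_const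
        (G (dist (xseq 0) (xseq 1)))
    exact squeeze_zero (fun n => hG0 _ dist_nonneg) (fun n => hgeo n) h1
  have hdist0 : ∀ e : ℝ, 0 < e → ∃ N, ∀ n ≥ N, dist (xseq n) (xseq (n+1)) < e := by
    intro e he
    obtain ⟨N, hN⟩ := eventually_atTop.mp (hGtend.eventually (gt_mem_nhds (hGpos e he)))
    refine ⟨N, fun n hn => ?_⟩
    by_contra hcon
    push_neg at hcon
    exact absurd (hGmono _ _ hcon) (not_le.mpr (hN n hn))
  have hdist0' : Tendsto (fun n => dist (xseq n) (xseq (n+1))) atTop (nhds 0) := by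
    rw [Metric.tendsto_atTop]
    intro e he
    obtain ⟨N, hN⟩ := hdist0 e he
    refine ⟨N, fun n hn => ?_⟩
    rw [Real.dist_eq, sub_zero, abs_of_nonneg dist_nonneg]
    exact hN n hn
  -- suppose not Cauchy
  by_contra hC
  rw [Metric.cauchySeq_iff] at hC
  push_neg at hC
  obtain ⟨ε, hε, hno⟩ := hC
  have key : ∀ i : ℕ, ∃ n m : ℕ, i + 1 ≤ n ∧ n < m ∧ ε ≤ dist (xseq m) (xseq n) ∧
      dist (xseq (m - 1)) (xseq n) < ε := by
    intro i
    obtain ⟨a, ha, b, hb, hab⟩ := hno (i + 1)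
    have hne : a ≠ b := by
      intro hEq
      rw [hEq, dist_self] at hab
      linarith
    have hnb : i + 1 ≤ min a b := le_min ha hb
    have hex : ∃ m, min a b < m ∧ ε ≤ dist (xseq m) (xseq (min a b)) := by
      refine ⟨max a b, min_lt_max.mpr hne, ?_⟩
      rcases le_total a b with h | h
      · rw [min_eq_left h, max_eq_right h, dist_comm]
        exact hab
      · rw [min_eq_right h, max_eq_left h]
        exact hab
    have hspec := Nat.find_spec hex
    refine ⟨min a b, Nat.find hex, hnb, hspec.1, hspec.2, ?_⟩
    rcases Nat.lt_or_ge (min a b) (Nat.find hex - 1) with hlt | hge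
    · have hmin := Nat.find_min hex (m := Nat.find hex - 1)
        (Nat.sub_lt (lt_of_le_of_lt (Nat.zero_le _) hspec.1) one_pos)
      push_neg at hmin
      exact hmin hlt
    · have hEq : Nat.find hex - 1 = min a b :=
        le_antisymm hge (Nat.le_sub_one_of_lt hspec.1)
      rw [hEq, dist_self]
      exact hε
  choose ni mi hni hlt hge hsmall using key
  have hni1 : ∀ i, 1 ≤ ni i := fun i => le_trans (Nat.le_add_left 1 i) (hni i)
  have hmi1 : ∀ i, 1 ≤ mi i := fun i => lt_of_le_of_lt (Nat.zero_le _) (hlt i)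
  have hms : ∀ i, mi i - 1 + 1 = mi i := fun i => Nat.succ_pred_eq_of_pos (hmi1 i)
  have hns : ∀ i, ni i - 1 + 1 = ni i := fun i => Nat.succ_pred_eq_of_pos (hni1 i)
  -- the three relevant distance sequences
  have hmid : Tendsto (fun i => dist (xseq (mi i - 1)) (xseq (mi i))) atTop (nhds 0) := by
    have htop : Tendsto (fun i => mi i - 1) atTop atTop := by
      refine tendsto_atTop_mono (fun i => ?_) tendsto_id
      have h1 : i < ni i := hni i
      have h2 : ni i ≤ mi i - 1 := Nat.le_sub_one_of_lt (hlt i)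
      exact le_trans h1.le h2
    have := hdist0'.comp htop
    refine this.congr fun i => ?_
    simp only [Function.comp_apply, hms i]
  have hnid : Tendsto (fun i => dist (xseq (ni i - 1)) (xseq (ni i))) atTop (nhds 0) := by
    have htop : Tendsto (fun i => ni i - 1) atTop atTop := by
      refine tendsto_atTop_mono (fun i => ?_) tendsto_id
      exact Nat.le_sub_one_of_lt (hni i)
    have := hdist0'.comp htop
    refine this.congr fun i => ?_
    simp only [Function.comp_apply, hns i]
  have hD : Tendsto (fun i => dist (xseq (mi i)) (xseq (ni i))) atTop (nhds ε) := by
    refine tendsto_of_tendsto_of_tendsto_of_le_of_le (g := fun _ => ε)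
      (h := fun i => dist (xseq (mi i - 1)) (xseq (mi i)) + ε)
      tendsto_const_nhds ?_ (fun i => hge i) ?_
    · simpa using hmid.add (tendsto_const_nhds (x := ε) (α := ℕ) (f := atTop))
    · intro i
      calc dist (xseq (mi i)) (xseq (ni i))
          ≤ dist (xseq (mi i)) (xseq (mi i - 1)) + dist (xseq (mi i - 1)) (xseq (ni i)) :=
            dist_triangle _ _ _
        _ ≤ dist (xseq (mi i - 1)) (xseq (mi i)) + ε := by
            rw [dist_comm (xseq (mi i)) (xseq (mi i - 1))]
            linarith [hsmall i]
  have he : Tendsto (fun i => dist (xseq (mi i)) (xseq (ni i)) +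
      dist (xseq (mi i - 1)) (xseq (mi i)) + dist (xseq (ni i - 1)) (xseq (ni i)))
      atTop (nhds ε) := by
    simpa using (hD.add hmid).add hnid
  have hkey2 : ∀ i, G ε ≤ k * G (dist (xseq (mi i)) (xseq (ni i)) +
      dist (xseq (mi i - 1)) (xseq (mi i)) + dist (xseq (ni i - 1)) (xseq (ni i))) := by
    intro i
    have h := hcontr' (S^[mi i - 1] x) (S^[ni i - 1] x)
    have e1 : T (S (S^[mi i - 1] x)) = xseq (mi i) := by
      rw [← Function.iterate_succ_apply' S (mi i - 1) x, Nat.succ_eq_add_one, hms i, ← hx]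
    have e2 : T (S (S^[ni i - 1] x)) = xseq (ni i) := by
      rw [← Function.iterate_succ_apply' S (ni i - 1) x, Nat.succ_eq_add_one, hns i, ← hx]
    have e3 : T (S^[mi i - 1] x) = xseq (mi i - 1) := (hx _).symm
    have e4 : T (S^[ni i - 1] x) = xseq (ni i - 1) := (hx _).symm
    rw [mPrime, e1, e2, e3, e4] at h
    refine le_trans (hGmono _ _ (hge i)) (le_trans h
      (mul_le_mul_of_nonneg_left (hGmono _ _ ?_) hk0))
    have t1 := dist_triangle (xseq (mi i - 1)) (xseq (mi i)) (xseq (ni i - 1))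
    have t2 := dist_triangle (xseq (mi i)) (xseq (ni i)) (xseq (ni i - 1))
    have t3 := dist_triangle (xseq (mi i - 1)) (xseq (mi i)) (xseq (ni i))
    have t4 := dist_triangle (xseq (ni i - 1)) (xseq (ni i)) (xseq (mi i))
    have c1 := dist_comm (xseq (ni i)) (xseq (ni i - 1))
    have c2 := dist_comm (xseq (ni i)) (xseq (mi i))
    have d0 : (0:ℝ) ≤ dist (xseq (mi i)) (xseq (ni i)) := dist_nonneg
    have d1 : (0:ℝ) ≤ dist (xseq (mi i - 1)) (xseq (mi i)) := dist_nonneg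
    have d2 : (0:ℝ) ≤ dist (xseq (ni i - 1)) (xseq (ni i)) := dist_nonneg
    refine max_le (max_le ?_ ?_) (max_le ?_ ?_) <;> linarith
  have hkG : Tendsto (fun i => k * G (dist (xseq (mi i)) (xseq (ni i)) +
      dist (xseq (mi i - 1)) (xseq (mi i)) + dist (xseq (ni i - 1)) (xseq (ni i))))
      atTop (nhds (k * G ε)) :=
    ((hGcont.tendsto ε).comp he).const_mul k
  have hfin : G ε ≤ k * G ε := ge_of_tendsto' hkG hkey2
  nlinarith [hGpos ε hε, mul_pos (sub_pos.mpr hk1) (hGpos ε hε)]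
end

section
/- Let (X,d) be a metric space, k ∈ [0,1), and let S, T : X → X be mappings such that for all x, y ∈ X, ∫₀^{d(TSx,TSy)} φ(t) dt ≤ k · ∫₀^{m'(Tx,Ty)} φ(t) dt, where m'(Tx,Ty) = max{d(Tx,Ty), d(Tx,TSx), d(Ty,TSy), (d(Tx,TSy)+d(Ty,TSx))/2}. Fix x ∈ X and set xₙ = T(Sⁿx). Then for every integer n ≥ 1, m'(xₙ₋₁, xₙ) := max{d(xₙ₋₁,xₙ), d(xₙ₋₁,xₙ), d(xₙ,xₙ₊₁), (d(xₙ₋₁,xₙ₊₁)+d(xₙ,xₙ))/2} = d(xₙ₋₁, xₙ). -/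
open Filter MeasureTheory intervalIntegral

theorem mPrime_of_successive_iterates
    {X : Type*} [MetricSpace X]
    (k : ℝ) (hk0 : 0 ≤ k) (hk1 : k < 1)
    (S T : X → X)
    (φ : ℝ → ℝ)
    (hφnonneg : ∀ t ∈ Set.Ici (0 : ℝ), 0 ≤ φ t)
    (hφint : ∀ K : Set ℝ, K ⊆ Set.Ici (0 : ℝ) → IsCompact K → IntegrableOn φ K)
    (hφpos : ∀ ε : ℝ, 0 < ε → 0 < ∫ t in (0 : ℝ)..ε, φ t)
    (hcontr : ∀ x y : X,
      (∫ t in (0 : ℝ)..(dist (T (S x)) (T (S y))), φ t) ≤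
        k * ∫ t in (0 : ℝ)..(mPrime T S x y), φ t)
    (x : X) (xseq : ℕ → X) (hx : ∀ n, xseq n = T (S^[n] x)) :
    ∀ n : ℕ, 1 ≤ n →
      max (max (dist (xseq (n - 1)) (xseq n)) (dist (xseq (n - 1)) (xseq n)))
        (max (dist (xseq n) (xseq (n + 1)))
          ((dist (xseq (n - 1)) (xseq (n + 1)) + dist (xseq n) (xseq n)) / 2)) =
      dist (xseq (n - 1)) (xseq n) := by
  intro n hn
  obtain ⟨m, rfl⟩ : ∃ m, n = m + 1 := ⟨n - 1, (Nat.succ_pred_eq_of_pos hn).symm⟩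
  simp only [Nat.add_sub_cancel, dist_self, add_zero]
  have hSm : S^[m+1] x = S (S^[m] x) := Function.iterate_succ_apply' S m x
  have hSm2 : S^[m+1+1] x = S (S^[m+1] x) := Function.iterate_succ_apply' S (m+1) x
  have e0 : T (S^[m] x) = xseq m := (hx m).symm
  have e1 : T (S (S^[m] x)) = xseq (m+1) := by rw [← hSm]; exact (hx (m+1)).symm
  have e2 : T (S^[m+1] x) = xseq (m+1) := (hx (m+1)).symm
  have e3 : T (S (S^[m+1] x)) = xseq (m+1+1) := by rw [← hSm2]; exact (hx (m+1+1)).symm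
  set a := dist (xseq m) (xseq (m+1)) with ha
  set b := dist (xseq (m+1)) (xseq (m+1+1)) with hb
  set c := dist (xseq m) (xseq (m+1+1)) with hc
  have hmp : mPrime T S (S^[m] x) (S^[m+1] x) = max (max a a) (max b (c / 2)) := by
    unfold mPrime
    rw [e0, e1, e2, e3]
    simp [dist_self, ← ha, ← hb, ← hc]
  have hctri : c ≤ a + b := dist_triangle _ _ _
  have ha0 : 0 ≤ a := dist_nonneg
  have hba : b ≤ a := by
    by_contra h
    push_neg at h
    have hmpb : mPrime T S (S^[m] x) (S^[m+1] x) = b := by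
      rw [hmp, max_self, max_eq_left (show c/2 ≤ b by linarith),
        max_eq_right h.le]
    have hco := hcontr (S^[m] x) (S^[m+1] x)
    rw [hmpb, e1, e3, ← hb] at hco
    have hbpos : 0 < b := lt_of_le_of_lt ha0 h
    have hIpos : 0 < ∫ t in (0:ℝ)..b, φ t := hφpos b hbpos
    nlinarith
  rw [max_self]
  exact max_eq_left (max_le hba (by linarith))
end

section
/- Let (X,d) be a complete metric space, and let S, T : X → X be mappings with S continuous, T continuous, one-to-one and subsequentially convergent. If the sequence xₙ = T(Sⁿx) converges to some a ∈ X for some x ∈ X, then there exists b ∈ X with Tb = a and Sb = b, i.e., S has a fixed point. -/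
open Filter

/-- `T` is subsequentially convergent: whenever `T ∘ y` converges, `y` has a
convergent subsequence. -/
def SubseqConvergent {X : Type*} [MetricSpace X] (T : X → X) : Prop :=
  ∀ y : ℕ → X, (∃ a, Tendsto (fun n => T (y n)) atTop (nhds a)) →
    ∃ (z : X) (g : ℕ → ℕ), StrictMono g ∧ Tendsto (fun n => y (g n)) atTop (nhds z)

theorem fixed_point_of_convergent_iterates
    {X : Type*} [MetricSpace X] [CompleteSpace X]
    (S T : X → X)
    (hScont : Continuous S)
    (hTcont : Continuous T) (hTinj : Function.Injective T)
    (hTsub : SubseqConvergent T)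
    (x a : X)
    (ha : Tendsto (fun n => T (S^[n] x)) atTop (nhds a)) :
    ∃ b : X, T b = a ∧ S b = b := by
  obtain ⟨z, g, hg, hz⟩ := hTsub (fun n => S^[n] x) ⟨a, ha⟩
  have hTz : Tendsto (fun n => T (S^[g n] x)) atTop (nhds (T z)) :=
    (hTcont.tendsto z).comp hz
  have hTa : Tendsto (fun n => T (S^[g n] x)) atTop (nhds a) :=
    ha.comp hg.tendsto_atTop
  have hTzA : T z = a := tendsto_nhds_unique hTz hTa
  -- now show S z = z
  have hSz : Tendsto (fun n => S^[g n + 1] x) atTop (nhds (S z)) := by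
    have := (hScont.tendsto z).comp hz
    simpa [Function.comp_def, Function.iterate_succ_apply'] using this
  have hTSz : Tendsto (fun n => T (S^[g n + 1] x)) atTop (nhds (T (S z))) :=
    (hTcont.tendsto _).comp hSz
  have hTSa : Tendsto (fun n => T (S^[g n + 1] x)) atTop (nhds a) := by
    have hmono : StrictMono (fun n => g n + 1) := fun m n h => by
      simpa using Nat.add_lt_add_right (hg h) 1
    exact ha.comp hmono.tendsto_atTop
  have : T (S z) = T z := (tendsto_nhds_unique hTSz hTSa).trans hTzA.symm
  exact ⟨z, hTzA, hTinj this⟩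
end
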